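/- Let k ≥ 2 be an integer. Every induced path of length at least six in Ĝ_k is contained in a single component: if (a_0, b_0), (a_1, b_1), …, (a_n, b_n) with n ≥ 6 is an induced path in Ĝ_k, then a_0 = a_1 = … = a_n. -/

import Mathlib

open SimpleGraph

/-- An induced path of length `n` in `G`: an injective sequence of `n+1` vertices,
adjacent exactly when consecutive. -/
def IsInducedPath {V : Type*} (G : SimpleGraph V) {n : ℕ} (x : Fin (n + 1) → V) : Prop :=
  Function.Injective x ∧ ∀ i j, G.Adj (x i) (x j) ↔ Nat.dist i.val j.val = 1

/-- `G` contains finite induced paths of unbounded length. -/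
def HasUnboundedPaths {V : Type*} (G : SimpleGraph V) : Prop :=
  ∀ n : ℕ, ∃ x : Fin (n + 1) → V, IsInducedPath G x

/-- `G` is path-minimal. -/
def PathMinimal {V : Type*} (G : SimpleGraph V) : Prop :=
  HasUnboundedPaths G ∧
    ∀ A : Set V, HasUnboundedPaths (G.induce A) → Nonempty (G ↪g G.induce A)

/-- The age of `G` is contained in the age of `H`. -/
def AgeSubset {V W : Type*} (G : SimpleGraph V) (H : SimpleGraph W) : Prop :=
  ∀ (n : ℕ) (F : SimpleGraph (Fin n)), Nonempty (F ↪g G) → Nonempty (F ↪g H)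

/-- The age of `G` contains no infinite antichain for embeddability. -/
def AgeWQO {V : Type*} (G : SimpleGraph V) : Prop :=
  ∀ f : ℕ → Σ n : ℕ, SimpleGraph (Fin n),
    (∀ i, Nonempty ((f i).2 ↪g G)) →
    ∃ i j, i ≠ j ∧ Nonempty ((f i).2 ↪g (f j).2)

/-- The set `A` carries an induced path of length `n` of `G` (covering all of `A`). -/
def IsPathOn {V : Type*} (G : SimpleGraph V) (A : Set V) (n : ℕ) : Prop :=
  ∃ x : Fin (n + 1) → V, Function.Injective x ∧ Set.range x = A ∧
    ∀ i j, G.Adj (x i) (x j) ↔ Nat.dist i.val j.val = 1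

/-- `G` embeds a direct sum of finite induced paths of unbounded length. -/
def EmbedsDirectSumOfPaths {V : Type*} (G : SimpleGraph V) : Prop :=
  ∃ A : ℕ → Set V, (∀ n, (A n).Finite) ∧
    (∀ m n, m ≠ n → Disjoint (A m) (A n)) ∧
    (∀ m n, m ≠ n → ∀ x ∈ A m, ∀ y ∈ A n, ¬ G.Adj x y) ∧
    ∀ n, ∃ m, n ≤ m ∧ IsPathOn G (A n) m

/-- `G` embeds a complete sum of finite induced paths of unbounded length. -/
def EmbedsCompleteSumOfPaths {V : Type*} (G : SimpleGraph V) : Prop :=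
  ∃ A : ℕ → Set V, (∀ n, (A n).Finite) ∧
    (∀ m n, m ≠ n → Disjoint (A m) (A n)) ∧
    (∀ m n, m ≠ n → ∀ x ∈ A m, ∀ y ∈ A n, G.Adj x y) ∧
    ∀ n, ∃ m, n ≤ m ∧ IsPathOn G (A n) m

/-- An isometric path of length `n` in `G`. -/
def IsIsometricPath {V : Type*} (G : SimpleGraph V) {n : ℕ} (x : Fin (n + 1) → V) : Prop :=
  (∀ i : Fin n, G.Adj (x i.castSucc) (x i.succ)) ∧
  ∀ i j, G.dist (x i) (x j) = Nat.dist i.val j.val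

/-- The set `A` carries an induced path of length `n` of `G` which is isometric in `G`. -/
def IsIsometricPathOn {V : Type*} (G : SimpleGraph V) (A : Set V) (n : ℕ) : Prop :=
  ∃ x : Fin (n + 1) → V, Function.Injective x ∧ Set.range x = A ∧
    (∀ i j, G.Adj (x i) (x j) ↔ Nat.dist i.val j.val = 1) ∧
    (∀ i j, G.dist (x i) (x j) = Nat.dist i.val j.val)

/-- The incomparability graph of a poset. -/
def incGraph (α : Type*) [PartialOrder α] : SimpleGraph α where
  Adj a b := ¬ a ≤ b ∧ ¬ b ≤ a
  symm := ⟨fun _ _ h => ⟨h.2, h.1⟩⟩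
  loopless := ⟨fun _ h => h.1 le_rfl⟩

/-- `w` is a (finite) factor of the infinite word `u`. -/
def IsFactor {A : Type*} (u : ℕ → A) (w : List A) : Prop :=
  ∃ p : ℕ, w = (List.range w.length).map fun i => u (p + i)

/-- `u` is uniformly recurrent. -/
def UniformlyRecurrent {A : Type*} (u : ℕ → A) : Prop :=
  ∀ n : ℕ, ∃ m : ℕ, ∀ v w : List A, IsFactor u v → IsFactor u w →
    v.length = n → w.length = m → v <:+: w

/-- The set of factors of `u` is inexhaustible. -/
def Inexhaustible {A : Type*} (u : ℕ → A) : Prop :=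
  ∀ v v' : List A, IsFactor u v → IsFactor u v' → ∃ w : List A, IsFactor u (v ++ w ++ v')

/-- The path on `n` vertices. -/
def pathG (n : ℕ) : SimpleGraph (Fin n) where
  Adj i j := Nat.dist i.val j.val = 1
  symm := ⟨fun i j h => by rwa [Nat.dist_comm]⟩
  loopless := ⟨fun i h => by simp [Nat.dist_self] at h⟩

/-- The graph `Ĝ_k` on `ℕ × ℕ`. -/
def Ghat (k : ℕ) : SimpleGraph (ℕ × ℕ) where
  Adj a b := (a.1 = b.1 ∧ Nat.dist a.2 b.2 = 1) ∨ (a.1 ≠ b.1 ∧ ¬ a.2 ≡ b.2 [MOD k])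
  symm := by
    refine ⟨?_⟩
    intro a b h
    rcases h with ⟨h1, h2⟩ | ⟨h1, h2⟩
    · exact Or.inl ⟨h1.symm, by rwa [Nat.dist_comm]⟩
    · exact Or.inr ⟨h1.symm, fun h => h2 h.symm⟩
  loopless := by
    refine ⟨?_⟩
    intro a h
    rcases h with ⟨_, h2⟩ | ⟨h1, _⟩
    · simp [Nat.dist_self] at h2
    · exact h1 rfl

/-- The vertex set of `Q̂_k`. -/
def Qset : Set (ℕ × ℕ) := {p : ℕ × ℕ | p.2 < p.1 + 5}

/-- The graph `Q̂_k`, induced by `Ĝ_k` on `Qset`. -/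
def Qhat (k : ℕ) : SimpleGraph Qset := (Ghat k).induce Qset

/-- `M` is a module (autonomous set) of `G`. -/
def IsModule {V : Type*} (G : SimpleGraph V) (M : Set V) : Prop :=
  ∀ v ∉ M, (∀ x ∈ M, G.Adj v x) ∨ (∀ x ∈ M, ¬ G.Adj v x)

/-- A trivial subset of a vertex set: empty, a singleton, or everything. -/
def IsTrivialSet {V : Type*} (M : Set V) : Prop :=
  M = ∅ ∨ (∃ v, M = {v}) ∨ M = Set.univ

/-- The graph `Ĝ_{u,⊕}` associated with the word `u : ℕ → Bool` and the Boolean sum. -/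
def GhatXor (u : ℕ → Bool) : SimpleGraph (ℕ × ℕ) where
  Adj a b := (a.1 = b.1 ∧ Nat.dist a.2 b.2 = 1) ∨ (a.1 ≠ b.1 ∧ u a.2 ≠ u b.2)
  symm := by
    refine ⟨?_⟩
    intro a b h
    rcases h with ⟨h1, h2⟩ | ⟨h1, h2⟩
    · exact Or.inl ⟨h1.symm, by rwa [Nat.dist_comm]⟩
    · exact Or.inr ⟨h1.symm, h2.symm⟩
  loopless := by
    refine ⟨?_⟩
    intro a h
    rcases h with ⟨_, h2⟩ | ⟨h1, _⟩
    · simp [Nat.dist_self] at h2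
    · exact h1 rfl

/-- The graph `Ĝ_{u,π₂}` associated with the word `u : ℕ → Bool` and the second projection. -/
def GhatPi2 (u : ℕ → Bool) : SimpleGraph (ℕ × ℕ) where
  Adj a b := (a.1 = b.1 ∧ Nat.dist a.2 b.2 = 1) ∨
    (a.1 < b.1 ∧ u b.2 = true) ∨ (b.1 < a.1 ∧ u a.2 = true)
  symm := by
    refine ⟨?_⟩
    intro a b h
    rcases h with ⟨h1, h2⟩ | ⟨h1, h2⟩ | ⟨h1, h2⟩
    · exact Or.inl ⟨h1.symm, by rwa [Nat.dist_comm]⟩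
    · exact Or.inr (Or.inr ⟨h1, h2⟩)
    · exact Or.inr (Or.inl ⟨h1, h2⟩)
  loopless := by
    refine ⟨?_⟩
    intro a h
    rcases h with ⟨_, h2⟩ | ⟨h1, _⟩ | ⟨h1, _⟩
    · simp [Nat.dist_self] at h2
    · exact lt_irrefl _ h1
    · exact lt_irrefl _ h1

/-- `u` has a constant factor of length `m`. -/
def HasConstFactor (u : ℕ → Bool) (m : ℕ) : Prop :=
  ∃ p : ℕ, ∀ i < m, u (p + i) = u p

/-!
Write `a i` for the column of the `i`-th vertex of the path and `r i` for the residue mod `k` of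
its second coordinate. Consecutive vertices have different residues, and non-consecutive ones
share their column or their residue. If an edge `(i, i + 1)` changes column, every vertex at
distance at least two from both of its ends has one of the two types `(a i, r (i + 1))` and
`(a (i + 1), r i)`, which differ in both coordinates. So two such vertices that are not
consecutive have the same type, while two consecutive ones have different types, and the edge
between them changes column too. A change of column therefore propagates to the first edge, and
then the vertices `3`, `4` and `6` all have the type of `6`, contradicting `r 3 ≠ r 4`.
-/

/-- `a i` and `r i` model the column and the residue class of the second coordinate of the
`i`-th vertex of an induced path `0, …, n` of `Ĝ_k`. -/
structure IsPathTrace {α β : Type*} (n : ℕ) (a : ℕ → α) (r : ℕ → β) : Prop where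
  res_ne_succ : ∀ i < n, r i ≠ r (i + 1)
  col_eq_or_res_eq : ∀ i j, i + 2 ≤ j → j ≤ n → a i = a j ∨ r i = r j

namespace IsPathTrace

variable {α β : Type*} {n : ℕ} {a : ℕ → α} {r : ℕ → β} {i j l : ℕ}

theorem col_eq_or_res_eq_of_far (h : IsPathTrace n a r) (hi : i ≤ n) (hj : j ≤ n)
    (hfar : i + 2 ≤ j ∨ j + 2 ≤ i) : a i = a j ∨ r i = r j := by
  rcases hfar with hfar | hfar
  · exact h.col_eq_or_res_eq i j hfar hj
  · exact (h.col_eq_or_res_eq j i hfar hi).imp Eq.symm Eq.symm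

theorem type_of_far (h : IsPathTrace n a r) (hi : i < n) (hcross : a i ≠ a (i + 1))
    (hj : j ≤ n) (hfar : j + 2 ≤ i ∨ i + 3 ≤ j) :
    (a j = a i ∧ r j = r (i + 1)) ∨ (a j = a (i + 1) ∧ r j = r i) := by
  have hres := h.res_ne_succ i hi
  have h₀ := h.col_eq_or_res_eq_of_far hj hi.le (by omega)
  have h₁ := h.col_eq_or_res_eq_of_far (j := i + 1) hj hi (by omega)
  rcases h₀ with h₀ | h₀ <;> rcases h₁ with h₁ | h₁
  · exact absurd (h₀.symm.trans h₁) hcross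
  · exact Or.inl ⟨h₀, h₁⟩
  · exact Or.inr ⟨h₁, h₀⟩
  · exact absurd (h₀.symm.trans h₁) hres

theorem eq_of_far (h : IsPathTrace n a r) (hi : i < n) (hcross : a i ≠ a (i + 1))
    (hl : l ≤ n) (hjfar : j + 2 ≤ i ∨ i + 3 ≤ j) (hlfar : l + 2 ≤ i ∨ i + 3 ≤ l)
    (hjl : j + 2 ≤ l) : a j = a l ∧ r j = r l := by
  have hres := h.res_ne_succ i hi
  have hjl' := h.col_eq_or_res_eq j l hjl hl
  rcases h.type_of_far hi hcross (by omega) hjfar with ⟨hja, hjr⟩ | ⟨hja, hjr⟩ <;>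
    rcases h.type_of_far hi hcross hl hlfar with ⟨hla, hlr⟩ | ⟨hla, hlr⟩ <;>
    grind

theorem col_ne_succ_of_far (h : IsPathTrace n a r) (hi : i < n) (hcross : a i ≠ a (i + 1))
    (hj : j < n) (hfar : j + 3 ≤ i ∨ i + 3 ≤ j) : a j ≠ a (j + 1) := by
  have hres := h.res_ne_succ i hi
  have hres' := h.res_ne_succ j hj
  rcases h.type_of_far hi hcross hj.le (by omega) with ⟨hja, hjr⟩ | ⟨hja, hjr⟩ <;>
    rcases h.type_of_far (j := j + 1) hi hcross hj (by omega) with ⟨hla, hlr⟩ | ⟨hla, hlr⟩ <;>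
    grind

theorem col_zero_eq_one (h : IsPathTrace n a r) (hn : 6 ≤ n) : a 0 = a 1 := by
  by_contra hcross
  have h36 := h.eq_of_far (i := 0) (j := 3) (l := 6) (by omega) hcross hn (by omega) (by omega)
    (by omega)
  have h46 := h.eq_of_far (i := 0) (j := 4) (l := 6) (by omega) hcross hn (by omega) (by omega)
    (by omega)
  exact h.res_ne_succ 3 (by omega) (h36.2.trans h46.2.symm)

theorem col_eq_succ (h : IsPathTrace n a r) (hn : 6 ≤ n) (hi : i < n) : a i = a (i + 1) := by
  by_contra hcross
  have hfirst : a 0 ≠ a 1 := by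
    rcases le_or_gt 3 i with h3 | h3
    · exact h.col_ne_succ_of_far hi hcross (by omega) (Or.inl h3)
    · have hlast := h.col_ne_succ_of_far (j := n - 1) hi hcross (by omega) (Or.inr (by omega))
      exact h.col_ne_succ_of_far (by omega) hlast (by omega) (Or.inl (by omega))
  exact hfirst (h.col_zero_eq_one hn)

theorem col_eq_zero (h : IsPathTrace n a r) (hn : 6 ≤ n) : ∀ j ≤ n, a j = a 0
  | 0, _ => rfl
  | j + 1, hj => (h.col_eq_succ hn hj).symm.trans (h.col_eq_zero hn j (by omega))

end IsPathTrace

theorem Nat.not_modEq_succ {k : ℕ} (hk : k ≠ 1) (b : ℕ) : ¬ b ≡ b + 1 [MOD k] := fun hb =>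
  hk (Nat.dvd_one.mp (by simpa using (Nat.modEq_iff_dvd' b.le_succ).mp hb))

theorem Ghat_adj_not_modEq {k : ℕ} (hk : k ≠ 1) {p q : ℕ × ℕ} (hpq : (Ghat k).Adj p q) :
    ¬ p.2 ≡ q.2 [MOD k] := by
  rcases hpq with ⟨-, hdist⟩ | ⟨-, hres⟩
  · obtain hq | hp : q.2 = p.2 + 1 ∨ p.2 = q.2 + 1 := by unfold Nat.dist at hdist; omega
    · rw [hq]; exact Nat.not_modEq_succ hk _
    · rw [hp]; exact fun h => Nat.not_modEq_succ hk _ h.symm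
  · exact hres

theorem IsInducedPath.isPathTrace_Ghat {k n : ℕ} (hk : k ≠ 1) {x : Fin (n + 1) → ℕ × ℕ}
    (hx : IsInducedPath (Ghat k) x) :
    IsPathTrace n (fun m => (x (Fin.ofNat (n + 1) m)).1)
      (fun m => (x (Fin.ofNat (n + 1) m)).2 % k) := by
  have hval (m : ℕ) (hm : m ≤ n) : (Fin.ofNat (n + 1) m).val = m := by
    rw [Fin.val_ofNat, Nat.mod_eq_of_lt (by omega)]
  constructor
  · intro i hi
    refine Ghat_adj_not_modEq hk ((hx.2 _ _).2 ?_)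
    rw [hval i hi.le, hval (i + 1) hi]
    simp [Nat.dist]
  · intro i j hij hj
    refine or_iff_not_imp_left.mpr fun hcol => ?_
    by_contra hres
    have hdist := (hx.2 _ _).1 (Or.inr ⟨hcol, hres⟩)
    rw [hval i (by omega), hval j hj] at hdist
    unfold Nat.dist at hdist
    omega

theorem long_induced_path_in_Ghat_in_one_component (k : ℕ) (hk : 2 ≤ k)
    {n : ℕ} (hn : 6 ≤ n) (x : Fin (n + 1) → ℕ × ℕ)
    (hx : IsInducedPath (Ghat k) x) :
    ∀ i j : Fin (n + 1), (x i).1 = (x j).1 := by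
  have hcol := (hx.isPathTrace_Ghat (by omega)).col_eq_zero hn
  intro i j
  simpa only [Fin.ofNat_val_eq_self] using (hcol i i.is_le).trans (hcol j j.is_le).symm
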